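/- arXiv:1305.1792 — 3 statements merged into one kernel-verified Lean document; each statement's English description precedes it below -/
import Mathlib

section
/- Let Λ = Λ_- ∪ Λ_+ be a lattice of Majorana sites with a reflection ϑ exchanging Λ_- and Λ_+, implemented as an anti-unitary on the Hilbert space with ϑ(c_j) = c_{ϑj}. Then for any A in the algebra 𝔄_- generated by {c_j : j ∈ Λ_-}, one has Tr(A ϑ(A)) ≥ 0. -/
/-! Expand `A` in Majorana words supported in `Λ₋`; then `ϑ A` is a combination of words
supported in `Λ₊`. For words `w`, `w'` on disjoint sets of sites the normalized trace
factorizes, `Tr (w w') · 2^N = Tr w · Tr w'`: if some site occurs an odd number of times in `w`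
or `w'`, it does so in `w w'` as well, and such a word is traceless because, the total number
of sites being even, some `c_j` anticommutes with it; otherwise `w` and `w'` reduce to scalars.
Hence `Tr (A ϑ A) · 2^N = Tr A · Tr (ϑ A) = |Tr A|²`. -/

open Matrix
open scoped ComplexOrder

noncomputable section

/-- The ordered Majorana monomial `M_β = c_{i₁} c_{i₂} ⋯ c_{i_k}` associated to the
subset `β = {i₁ < i₂ < ⋯ < i_k}` of sites. -/
def cliffordMonomial {m d : ℕ} (c : Fin m → Matrix (Fin d) (Fin d) ℂ)
    (β : Finset (Fin m)) : Matrix (Fin d) (Fin d) ℂ :=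
  ((β.sort (· ≤ ·)).map c).prod

/-- The matrix exponential. -/
def mexp {d : ℕ} (A : Matrix (Fin d) (Fin d) ℂ) : Matrix (Fin d) (Fin d) ℂ :=
  NormedSpace.exp A

/-- The even subalgebra `𝔄(B)^even`: the subalgebra generated by products of
two Majoranas at sites in `B` (equivalently, by even monomials). -/
def evenAlgebra {m d : ℕ} (c : Fin m → Matrix (Fin d) (Fin d) ℂ)
    (B : Finset (Fin m)) : Subalgebra ℂ (Matrix (Fin d) (Fin d) ℂ) :=
  Algebra.adjoin ℂ {x | ∃ i ∈ B, ∃ j ∈ B, x = c i * c j}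

/-- The full subalgebra `𝔄(B)` generated by the Majoranas at sites in `B`. -/
def majoranaAlgebra {m d : ℕ} (c : Fin m → Matrix (Fin d) (Fin d) ℂ)
    (B : Finset (Fin m)) : Subalgebra ℂ (Matrix (Fin d) (Fin d) ℂ) :=
  Algebra.adjoin ℂ (c '' ↑B)

theorem Algebra.adjoin_image_le_span_list_prod {R ι A : Type*} [CommSemiring R] [Semiring A]
    [Algebra R A] (c : ι → A) (s : Set ι) :
    Subalgebra.toSubmodule (Algebra.adjoin R (c '' s)) ≤
      Submodule.span R {x | ∃ l : List ι, (∀ i ∈ l, i ∈ s) ∧ (l.map c).prod = x} := by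
  rw [Algebra.adjoin_eq_span]
  refine Submodule.span_mono fun x hx => ?_
  induction hx using Submonoid.closure_induction with
  | mem _ hx =>
    obtain ⟨i, hi, rfl⟩ := hx
    exact ⟨[i], by simpa using hi, by simp⟩
  | one => exact ⟨[], by simp, by simp⟩
  | mul _ _ _ _ hx hy =>
    obtain ⟨l, hl, rfl⟩ := hx
    obtain ⟨l', hl', rfl⟩ := hy
    exact ⟨l ++ l', fun i hi => (List.mem_append.mp hi).elim (hl i) (hl' i), by simp⟩

theorem Matrix.eq_one_of_isIdempotentElem_of_trace_eq {K n : Type*} [Field K] [CharZero K]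
    [Fintype n] [DecidableEq n] {E : Matrix n n K} (hE : IsIdempotentElem E)
    (htr : trace E = Fintype.card n) : E = 1 := by
  have htr' : LinearMap.trace K _ (toLinAlgEquiv' (1 - E)) = 0 := by
    change LinearMap.trace K _ (toLin' (1 - E)) = 0
    simp [htr]
  have h :=
    LinearMap.IsIdempotentElem.eq_zero_of_trace_eq_zero (hE.one_sub.map toLinAlgEquiv') htr'
  exact (sub_eq_zero.mp ((map_eq_zero_iff _ toLinAlgEquiv'.injective).mp h)).symm

section Majorana

variable {ι A : Type*} [DecidableEq ι] [Ring A] [Algebra ℂ A]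

def MajoranaRelations (c : ι → A) : Prop :=
  ∀ i j, c i * c j + c j * c i = if i = j then (2 : ℂ) • 1 else 0

namespace MajoranaRelations

variable {c : ι → A}

theorem mul_self (hc : MajoranaRelations c) (i : ι) : c i * c i = 1 := by
  have h := hc i i
  rw [if_pos rfl, ← two_smul ℂ (c i * c i)] at h
  exact smul_right_injective A two_ne_zero h

theorem mul_comm_of_ne (hc : MajoranaRelations c) {i j : ι} (h : i ≠ j) :
    c i * c j = -(c j * c i) :=
  eq_neg_of_add_eq_zero_left (by simpa [h] using hc i j)

/-- The sign is `(-1)` to the number of letters of `l` other than `i`, written without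
truncated subtraction. -/
theorem mul_list_prod (hc : MajoranaRelations c) (i : ι) (l : List ι) :
    c i * (l.map c).prod = (-1 : ℂ) ^ (l.length + l.count i) • ((l.map c).prod * c i) := by
  induction l with
  | nil => simp
  | cons j l ih =>
    have hswap : c i * c j = (-1 : ℂ) ^ (1 + if j = i then 1 else 0) • (c j * c i) := by
      by_cases h : j = i
      · subst h; simp
      · simp [h, hc.mul_comm_of_ne (Ne.symm h)]
    rw [List.map_cons, List.prod_cons, ← mul_assoc, hswap, smul_mul_assoc, mul_assoc, ih,
      mul_smul_comm, smul_smul, ← pow_add, mul_assoc]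
    congr 2
    simp only [List.length_cons, List.count_cons, beq_iff_eq]
    omega

theorem exists_list_prod_eq_smul_one (hc : MajoranaRelations c) (l : List ι)
    (h : ∀ i, Even (l.count i)) : ∃ a : ℂ, (l.map c).prod = a • 1 := by
  induction hlen : l.length using Nat.strong_induction_on generalizing l with
  | _ k ih =>
  match l with
  | [] => exact ⟨1, by simp⟩
  | i :: t =>
    have hit : i ∈ t := by
      have := h i
      rw [List.count_cons_self] at this
      exact List.count_pos_iff.mp (Nat.pos_of_ne_zero fun h0 => by simp [h0] at this)
    obtain ⟨a, b, rfl⟩ := List.append_of_mem hit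
    have hcancel : ((i :: (a ++ i :: b)).map c).prod =
        (-1 : ℂ) ^ (a.length + a.count i) • ((a ++ b).map c).prod := by
      simp only [List.map_cons, List.map_append, List.prod_cons, List.prod_append]
      rw [← mul_assoc, hc.mul_list_prod, smul_mul_assoc, mul_assoc, ← mul_assoc (c i),
        hc.mul_self, one_mul]
    have heven : ∀ j, Even ((a ++ b).count j) := by
      intro j
      have := h j
      simp only [List.count_cons, List.count_append, beq_iff_eq] at this ⊢
      split_ifs at this <;> grind
    obtain ⟨z, hz⟩ := ih _ (by simp [← hlen]) (a ++ b) heven rfl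
    exact ⟨_ * z, by rw [hcancel, hz, smul_smul]⟩

variable {n : Type*} [Fintype n] [DecidableEq n] {c : ι → Matrix n n ℂ}

theorem trace_list_prod_eq_zero_of_odd (hc : MajoranaRelations c) {i : ι} {l : List ι}
    (h : Odd (l.length + l.count i)) : trace (l.map c).prod = 0 := by
  set P := (l.map c).prod
  have hanti : c i * P * c i = -P := by
    rw [hc.mul_list_prod, h.neg_one_pow, neg_one_smul, neg_mul, mul_assoc, hc.mul_self, mul_one]
  have : -trace P = trace P := by
    rw [← trace_neg, ← hanti, trace_mul_cycle, hc.mul_self, one_mul]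
  exact self_eq_neg.mp this.symm

theorem trace_list_prod_eq_zero [Fintype ι] (hc : MajoranaRelations c)
    (hι : Even (Fintype.card ι)) {i : ι} {l : List ι} (h : Odd (l.count i)) :
    trace (l.map c).prod = 0 := by
  rcases Nat.even_or_odd l.length with hl | hl
  · exact hc.trace_list_prod_eq_zero_of_odd (hl.add_odd h)
  · obtain ⟨j, hj⟩ : ∃ j, Even (l.count j) := by
      -- otherwise `l.length`, a sum of `Fintype.card ι` odd counts, would be even
      by_contra! hodd
      have hsum : ∑ j, l.count j = l.length := by
        simpa using Multiset.sum_count_eq_card (s := .univ) (m := (l : Multiset ι)) (by simp)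
      refine Nat.not_even_iff_odd.mpr hl (hsum ▸ (Finset.even_sum_iff_even_card_odd _).mpr ?_)
      simpa [Nat.not_even_iff_odd.mp (hodd _)] using hι
    exact hc.trace_list_prod_eq_zero_of_odd (hl.add_even hj)

theorem trace_list_prod_append [Fintype ι] (hc : MajoranaRelations c)
    (hι : Even (Fintype.card ι)) {l l' : List ι} (hll' : l.Disjoint l') :
    trace ((l ++ l').map c).prod * Fintype.card n =
      trace (l.map c).prod * trace (l'.map c).prod := by
  by_cases hl : ∃ i, Odd (l.count i)
  · obtain ⟨i, hi⟩ := hl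
    have : l'.count i = 0 := List.count_eq_zero_of_not_mem (hll' (List.count_pos_iff.mp hi.pos))
    rw [hc.trace_list_prod_eq_zero hι hi,
      hc.trace_list_prod_eq_zero hι (i := i) (by simpa [this]), zero_mul, zero_mul]
  by_cases hl' : ∃ i, Odd (l'.count i)
  · obtain ⟨i, hi⟩ := hl'
    have : l.count i = 0 :=
      List.count_eq_zero_of_not_mem fun h => hll' h (List.count_pos_iff.mp hi.pos)
    rw [hc.trace_list_prod_eq_zero hι hi,
      hc.trace_list_prod_eq_zero hι (i := i) (by simpa [this]), zero_mul, mul_zero]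
  push Not at hl hl'
  obtain ⟨a, ha⟩ := hc.exists_list_prod_eq_smul_one l (by simpa using hl)
  obtain ⟨b, hb⟩ := hc.exists_list_prod_eq_smul_one l' (by simpa using hl')
  simp only [List.map_append, List.prod_append, ha, hb, smul_mul_smul_comm, mul_one, trace_smul,
    trace_one, smul_eq_mul]
  ring

end MajoranaRelations

end Majorana

theorem trace_mul_mul_card_eq_of_disjoint {m d : ℕ} {c : Fin m → Matrix (Fin d) (Fin d) ℂ}
    (hc : MajoranaRelations c) (hm : Even m) {S T : Finset (Fin m)} (hST : Disjoint S T)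
    {X Y : Matrix (Fin d) (Fin d) ℂ} (hX : X ∈ majoranaAlgebra c S)
    (hY : Y ∈ majoranaAlgebra c T) :
    trace (X * Y) * d = trace X * trace Y := by
  have hX' := Algebra.adjoin_image_le_span_list_prod c S hX
  have hY' := Algebra.adjoin_image_le_span_list_prod c T hY
  clear hX hY
  induction hX', hY' using Submodule.span_induction₂ with
  | mem_mem x y hx hy =>
    obtain ⟨l, hl, rfl⟩ := hx
    obtain ⟨l', hl', rfl⟩ := hy
    have hll' : l.Disjoint l' := fun i hi hi' =>
      Finset.disjoint_left.mp hST (hl i hi) (hl' i hi')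
    simpa using hc.trace_list_prod_append (by simpa using hm) hll'
  | zero_left => simp
  | zero_right => simp
  | add_left x y z _ _ _ hx hy =>
    rw [add_mul, trace_add, trace_add]; linear_combination hx + hy
  | add_right x y z _ _ _ hy hz =>
    rw [mul_add, trace_add, trace_add]; linear_combination hy + hz
  | smul_left r x y _ _ h =>
    rw [smul_mul_assoc, trace_smul, trace_smul, smul_eq_mul, smul_eq_mul]
    linear_combination r * h
  | smul_right r x y _ _ h =>
    rw [mul_smul_comm, trace_smul, trace_smul, smul_eq_mul, smul_eq_mul]
    linear_combination r * h

theorem map_mem_majoranaAlgebra {m d : ℕ} {c : Fin m → Matrix (Fin d) (Fin d) ℂ}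
    {S T : Finset (Fin m)} (θ : Matrix (Fin d) (Fin d) ℂ → Matrix (Fin d) (Fin d) ℂ)
    (hadd : ∀ A B, θ (A + B) = θ A + θ B)
    (hsmul : ∀ (z : ℂ) A, θ (z • A) = (starRingEnd ℂ) z • θ A)
    (hmul : ∀ A B, θ (A * B) = θ A * θ B) (hone : θ 1 = 1)
    (ρ : Fin m → Fin m) (hc : ∀ j, θ (c j) = c (ρ j)) (hρ : ∀ j ∈ S, ρ j ∈ T)
    {X : Matrix (Fin d) (Fin d) ℂ} (hX : X ∈ majoranaAlgebra c S) :
    θ X ∈ majoranaAlgebra c T := by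
  induction hX using Algebra.adjoin_induction with
  | mem x hx =>
    obtain ⟨j, hj, rfl⟩ := hx
    exact hc j ▸ Algebra.subset_adjoin ⟨ρ j, hρ j hj, rfl⟩
  | algebraMap r =>
    rw [Algebra.algebraMap_eq_smul_one, hsmul, hone]
    exact Subalgebra.smul_mem _ (Subalgebra.one_mem _) _
  | add x y _ _ hx hy => exact hadd x y ▸ add_mem hx hy
  | mul x y _ _ hx hy => exact hmul x y ▸ mul_mem hx hy

theorem reflection_positivity_I_general
    (N : ℕ) (c : Fin (2 * N) → Matrix (Fin (2 ^ N)) (Fin (2 ^ N)) ℂ)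
    (hClif : ∀ i j, c i * c j + c j * c i = if i = j then (2 : ℂ) • 1 else 0)
    (Λm Λp : Finset (Fin (2 * N))) (hdisj : Disjoint Λm Λp)
    (ρ : Equiv.Perm (Fin (2 * N)))
    (hρm : ∀ j ∈ Λm, ρ j ∈ Λp)
    (θ : Matrix (Fin (2 ^ N)) (Fin (2 ^ N)) ℂ → Matrix (Fin (2 ^ N)) (Fin (2 ^ N)) ℂ)
    (hθadd : ∀ A B, θ (A + B) = θ A + θ B)
    (hθsmul : ∀ (z : ℂ) A, θ (z • A) = (starRingEnd ℂ) z • θ A)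
    (hθmul : ∀ A B, θ (A * B) = θ A * θ B)
    (hθtr : ∀ A, Matrix.trace (θ A) = (starRingEnd ℂ) (Matrix.trace A))
    (hθc : ∀ j, θ (c j) = c (ρ j))
    (A : Matrix (Fin (2 ^ N)) (Fin (2 ^ N)) ℂ)
    (hA : A ∈ majoranaAlgebra c Λm) :
    0 ≤ Matrix.trace (A * θ A) := by
  have hθ1 : θ 1 = 1 := eq_one_of_isIdempotentElem_of_trace_eq
    (by rw [IsIdempotentElem, ← hθmul, one_mul]) (by rw [hθtr, trace_one, Complex.conj_natCast])
  have hθA := map_mem_majoranaAlgebra θ hθadd hθsmul hθmul hθ1 ρ hθc hρm hA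
  have hfactor := trace_mul_mul_card_eq_of_disjoint hClif (even_two_mul N) hdisj hA hθA
  rw [hθtr, Complex.mul_conj] at hfactor
  have htr : trace (A * θ A) = ((Complex.normSq (trace A) / 2 ^ N : ℝ) : ℂ) := by
    push_cast [← hfactor]
    field_simp
  exact htr ▸ Complex.zero_le_real.mpr (div_nonneg (Complex.normSq_nonneg _) (by positivity))

/-- Reflection Positivity I: for `A` in the algebra generated by the Majoranas
at sites in `Λ₋`, one has `Tr(A ϑ(A)) ≥ 0`. -/
theorem reflection_positivity_I
    (N : ℕ) (c : Fin (2 * N) → Matrix (Fin (2 ^ N)) (Fin (2 ^ N)) ℂ)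
    (hClif : ∀ i j, c i * c j + c j * c i = if i = j then (2 : ℂ) • 1 else 0)
    (hSA : ∀ i, (c i)ᴴ = c i)
    (Λm Λp : Finset (Fin (2 * N))) (hdisj : Disjoint Λm Λp)
    (hunion : Λm ∪ Λp = Finset.univ)
    (ρ : Equiv.Perm (Fin (2 * N))) (hρ : ∀ j, ρ (ρ j) = j)
    (hρm : ∀ j ∈ Λm, ρ j ∈ Λp)
    (θ : Matrix (Fin (2 ^ N)) (Fin (2 ^ N)) ℂ → Matrix (Fin (2 ^ N)) (Fin (2 ^ N)) ℂ)
    (hθadd : ∀ A B, θ (A + B) = θ A + θ B)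
    (hθsmul : ∀ (z : ℂ) A, θ (z • A) = (starRingEnd ℂ) z • θ A)
    (hθmul : ∀ A B, θ (A * B) = θ A * θ B)
    (hθstar : ∀ A, θ Aᴴ = (θ A)ᴴ)
    (hθtr : ∀ A, Matrix.trace (θ A) = (starRingEnd ℂ) (Matrix.trace A))
    (hθc : ∀ j, θ (c j) = c (ρ j))
    (A : Matrix (Fin (2 ^ N)) (Fin (2 ^ N)) ℂ)
    (hA : A ∈ majoranaAlgebra c Λm) :
    0 ≤ Matrix.trace (A * θ A) :=
  reflection_positivity_I_general N c hClif Λm Λp hdisj ρ hρm θ hθadd hθsmul hθmul hθtr hθc A hA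
end
end

section
/- For A ∈ 𝔄_- expanded in the monomial basis as A = Σ_β a_β M_β, one has Tr(A ϑ(A)) = 2^N |a_0|², where a_0 is the coefficient of the identity. -/
/-!
Expanding `A` in both factors, `Tr(A ϑ(A)) = ∑ a_β conj(a_β') Tr(M_β ϑ(M_β'))`. Since `ϑ` sends
the Majoranas of `Λ₋` to Majoranas outside `Λ₋`, each `M_β ϑ(M_β')` is a product of distinct
Majoranas, nonempty unless `β = β' = ∅`. Such a product anticommutes with some Majorana, hence is
traceless, and only `|a_∅|² Tr(ϑ(1)) = 2^N |a_∅|²` survives.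
-/

open Matrix
open scoped ComplexOrder

noncomputable section

section Majorana

variable {ι R : Type*} [DecidableEq ι] [Ring R] [Algebra ℂ R] {c : ι → R}

theorem majorana_mul_self
    (hc : ∀ i j, c i * c j + c j * c i = if i = j then (2 : ℂ) • 1 else 0) (i : ι) :
    c i * c i = 1 := by
  have h := hc i i
  rw [if_pos rfl, ← two_smul ℂ] at h
  exact smul_right_injective R two_ne_zero h

theorem majorana_anticomm
    (hc : ∀ i j, c i * c j + c j * c i = if i = j then (2 : ℂ) • 1 else 0) {i j : ι}
    (hij : i ≠ j) : c i * c j = -(c j * c i) := by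
  have h := hc i j
  rw [if_neg hij] at h
  exact eq_neg_of_add_eq_zero_left h

theorem majorana_mul_prod
    (hc : ∀ i j, c i * c j + c j * c i = if i = j then (2 : ℂ) • 1 else 0) {i : ι}
    {l : List ι} (hi : i ∉ l) :
    c i * (l.map c).prod = (-1) ^ l.length * ((l.map c).prod * c i) := by
  induction l with
  | nil => simp
  | cons j t ih =>
    rw [List.mem_cons, not_or] at hi
    simp only [List.map_cons, List.prod_cons, List.length_cons, pow_succ]
    rw [← mul_assoc, majorana_anticomm hc hi.1, neg_mul, mul_assoc, ih hi.2,
      ((Commute.neg_one_right (c j)).pow_right _).left_comm]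
    simp only [mul_neg, mul_one, neg_mul, mul_assoc]

end Majorana

theorem trace_mul_eq_zero_of_anticomm {n : Type*} [Fintype n] {x y : Matrix n n ℂ}
    (h : x * y = -(y * x)) : trace (x * y) = 0 := by
  have : trace (x * y) = -trace (x * y) :=
    calc trace (x * y) = trace (y * x) := trace_mul_comm x y
      _ = -trace (x * y) := by rw [h, trace_neg, neg_neg]
  linear_combination this / 2

/-- With an even number of Majoranas, every nonempty product of distinct ones anticommutes
with some Majorana: with the first factor if its length is even, with one it omits if odd. -/
theorem trace_majorana_prod_eq_zero {ι n : Type*} [Fintype ι] [DecidableEq ι] [Fintype n]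
    [DecidableEq n] {c : ι → Matrix n n ℂ}
    (hc : ∀ i j, c i * c j + c j * c i = if i = j then (2 : ℂ) • 1 else 0)
    (hι : Even (Fintype.card ι)) {l : List ι} (hl : l.Nodup) (hne : l ≠ []) :
    trace (l.map c).prod = 0 := by
  rcases Nat.even_or_odd l.length with hev | hodd
  · obtain ⟨i, t, rfl⟩ := List.exists_cons_of_ne_nil hne
    have ht : Odd t.length := by simpa [Nat.even_add_one] using hev
    rw [List.map_cons, List.prod_cons]
    apply trace_mul_eq_zero_of_anticomm
    rw [majorana_mul_prod hc (List.nodup_cons.mp hl).1, ht.neg_one_pow, neg_one_mul]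
  · have hlt : l.toFinset.card < (Finset.univ : Finset ι).card := by
      rw [List.toFinset_card_of_nodup hl, Finset.card_univ]
      refine lt_of_le_of_ne hl.length_le_card fun h => ?_
      exact Nat.not_even_iff_odd.mpr hodd (h ▸ hι)
    obtain ⟨j, -, hj⟩ := Finset.exists_mem_notMem_of_card_lt_card hlt
    have hanti := majorana_mul_prod hc (mt List.mem_toFinset.mpr hj)
    rw [hodd.neg_one_pow, neg_one_mul] at hanti
    have hsq := majorana_mul_self hc j
    calc trace (l.map c).prod = trace (c j * (c j * (l.map c).prod)) := by
          rw [← mul_assoc, hsq, one_mul]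
      _ = 0 := by
          apply trace_mul_eq_zero_of_anticomm
          rw [← mul_assoc, hsq, one_mul, hanti, neg_mul, neg_neg, mul_assoc, hsq, mul_one]

section Reflection

variable {m d : ℕ} {c : Fin m → Matrix (Fin d) (Fin d) ℂ}
  {θ : Matrix (Fin d) (Fin d) ℂ → Matrix (Fin d) (Fin d) ℂ} {ρ : Equiv.Perm (Fin m)}

theorem reflect_one
    (hc : ∀ i j, c i * c j + c j * c i = if i = j then (2 : ℂ) • 1 else 0)
    (hθmul : ∀ A B, θ (A * B) = θ A * θ B) (hθc : ∀ j, θ (c j) = c (ρ j)) (j : Fin m) :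
    θ 1 = 1 :=
  calc θ 1 = θ (c j * c j) := by rw [majorana_mul_self hc]
    _ = 1 := by rw [hθmul, hθc, majorana_mul_self hc]

theorem reflect_cliffordMonomial [Nonempty (Fin m)]
    (hc : ∀ i j, c i * c j + c j * c i = if i = j then (2 : ℂ) • 1 else 0)
    (hθmul : ∀ A B, θ (A * B) = θ A * θ B) (hθc : ∀ j, θ (c j) = c (ρ j))
    (β : Finset (Fin m)) :
    θ (cliffordMonomial c β) = (((β.sort (· ≤ ·)).map ρ).map c).prod := by
  rw [cliffordMonomial]
  induction β.sort (· ≤ ·) with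
  | nil => exact reflect_one hc hθmul hθc (Classical.arbitrary _)
  | cons i t ih => simp only [List.map_cons, List.prod_cons, hθmul, hθc, ih]

theorem trace_cliffordMonomial_mul_reflect_eq_zero
    (hc : ∀ i j, c i * c j + c j * c i = if i = j then (2 : ℂ) • 1 else 0)
    (hθmul : ∀ A B, θ (A * B) = θ A * θ B) (hθc : ∀ j, θ (c j) = c (ρ j))
    (hm : Even m) {Λ : Finset (Fin m)}
    (hρΛ : ∀ j ∈ Λ, ρ j ∉ Λ) {β β' : Finset (Fin m)} (hβ : β ⊆ Λ) (hβ' : β' ⊆ Λ)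
    (hne : β ≠ ∅ ∨ β' ≠ ∅) :
    trace (cliffordMonomial c β * θ (cliffordMonomial c β')) = 0 := by
  set l := β.sort (· ≤ ·) ++ (β'.sort (· ≤ ·)).map ρ
  obtain ⟨j, hj⟩ : ∃ j, j ∈ l := by
    rcases hne with h | h <;> obtain ⟨j, hj⟩ := Finset.nonempty_iff_ne_empty.mpr h
    · exact ⟨j, List.mem_append_left _ ((Finset.mem_sort _).mpr hj)⟩
    · exact ⟨ρ j, List.mem_append_right _ (List.mem_map_of_mem ((Finset.mem_sort _).mpr hj))⟩
  have : Nonempty (Fin m) := ⟨j⟩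
  have hl : l.Nodup := by
    refine List.nodup_append.mpr ⟨Finset.sort_nodup _ _,
      (Finset.sort_nodup _ _).map ρ.injective, ?_⟩
    rintro _ hi _ hk rfl
    obtain ⟨k, hk, hki⟩ := List.mem_map.mp hk
    rw [Finset.mem_sort] at hi hk
    exact hρΛ k (hβ' hk) (hki ▸ hβ hi)
  rw [reflect_cliffordMonomial hc hθmul hθc, cliffordMonomial, ← List.prod_append,
    ← List.map_append]
  exact trace_majorana_prod_eq_zero hc (by simpa using hm) hl (List.ne_nil_of_mem hj)

end Reflection

theorem trace_mul_reflect_eq_const_coeff_general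
    (N : ℕ) (c : Fin (2 * N) → Matrix (Fin (2 ^ N)) (Fin (2 ^ N)) ℂ)
    (hClif : ∀ i j, c i * c j + c j * c i = if i = j then (2 : ℂ) • 1 else 0)
    (Λm Λp : Finset (Fin (2 * N))) (hdisj : Disjoint Λm Λp)
    (ρ : Equiv.Perm (Fin (2 * N)))
    (hρm : ∀ j ∈ Λm, ρ j ∈ Λp)
    (θ : Matrix (Fin (2 ^ N)) (Fin (2 ^ N)) ℂ → Matrix (Fin (2 ^ N)) (Fin (2 ^ N)) ℂ)
    (hθadd : ∀ A B, θ (A + B) = θ A + θ B)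
    (hθsmul : ∀ (z : ℂ) A, θ (z • A) = (starRingEnd ℂ) z • θ A)
    (hθmul : ∀ A B, θ (A * B) = θ A * θ B)
    (hθtr : ∀ A, Matrix.trace (θ A) = (starRingEnd ℂ) (Matrix.trace A))
    (hθc : ∀ j, θ (c j) = c (ρ j))
    (A : Matrix (Fin (2 ^ N)) (Fin (2 ^ N)) ℂ)
    (a : Finset (Fin (2 * N)) → ℂ)
    (hA : A = ∑ β ∈ Λm.powerset, a β • cliffordMonomial c β) :
    Matrix.trace (A * θ A) = (2 : ℂ) ^ N * ((‖a ∅‖ : ℝ) : ℂ) ^ 2 := by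
  let θₗ : Matrix (Fin (2 ^ N)) (Fin (2 ^ N)) ℂ →ₛₗ[starRingEnd ℂ] Matrix _ _ ℂ :=
    { toFun := θ, map_add' := hθadd, map_smul' := hθsmul }
  have hθA : θ A = ∑ β ∈ Λm.powerset, starRingEnd ℂ (a β) • θ (cliffordMonomial c β) := by
    rw [hA]
    exact (map_sum θₗ _ _).trans (Finset.sum_congr rfl fun β _ => θₗ.map_smulₛₗ _ _)
  have hρΛm : ∀ j ∈ Λm, ρ j ∉ Λm := fun j hj hρj => Finset.disjoint_left.mp hdisj hρj (hρm j hj)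
  calc trace (A * θ A)
      = ∑ p ∈ Λm.powerset ×ˢ Λm.powerset, a p.1 * starRingEnd ℂ (a p.2) *
          trace (cliffordMonomial c p.1 * θ (cliffordMonomial c p.2)) := by
        rw [hθA, hA, Finset.sum_mul_sum, ← Finset.sum_product', trace_sum]
        refine Finset.sum_congr rfl fun p _ => ?_
        rw [smul_mul_smul_comm, trace_smul, smul_eq_mul]
    _ = a ∅ * starRingEnd ℂ (a ∅) * trace (cliffordMonomial c ∅ * θ (cliffordMonomial c ∅)) := by
        refine Finset.sum_eq_single_of_mem (∅, ∅) (by simp) fun p hp hne => ?_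
        rw [Finset.mem_product, Finset.mem_powerset, Finset.mem_powerset] at hp
        rw [trace_cliffordMonomial_mul_reflect_eq_zero hClif hθmul hθc (even_two_mul N) hρΛm
          hp.1 hp.2 (by rwa [Ne, Prod.ext_iff, not_and_or] at hne), mul_zero]
    _ = (2 : ℂ) ^ N * ((‖a ∅‖ : ℝ) : ℂ) ^ 2 := by
        rw [cliffordMonomial, Finset.sort_empty, List.map_nil, List.prod_nil, one_mul, hθtr,
          trace_one, Fintype.card_fin, Complex.mul_conj']
        push_cast
        rw [map_pow, map_ofNat, mul_comm]

/-- For `A ∈ 𝔄₋` expanded in the monomial basis, `Tr(A ϑ(A)) = 2^N |a₀|²`. -/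
theorem trace_mul_reflect_eq_const_coeff
    (N : ℕ) (c : Fin (2 * N) → Matrix (Fin (2 ^ N)) (Fin (2 ^ N)) ℂ)
    (hClif : ∀ i j, c i * c j + c j * c i = if i = j then (2 : ℂ) • 1 else 0)
    (hSA : ∀ i, (c i)ᴴ = c i)
    (Λm Λp : Finset (Fin (2 * N))) (hdisj : Disjoint Λm Λp)
    (hunion : Λm ∪ Λp = Finset.univ)
    (ρ : Equiv.Perm (Fin (2 * N))) (hρ : ∀ j, ρ (ρ j) = j)
    (hρm : ∀ j ∈ Λm, ρ j ∈ Λp)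
    (θ : Matrix (Fin (2 ^ N)) (Fin (2 ^ N)) ℂ → Matrix (Fin (2 ^ N)) (Fin (2 ^ N)) ℂ)
    (hθadd : ∀ A B, θ (A + B) = θ A + θ B)
    (hθsmul : ∀ (z : ℂ) A, θ (z • A) = (starRingEnd ℂ) z • θ A)
    (hθmul : ∀ A B, θ (A * B) = θ A * θ B)
    (hθstar : ∀ A, θ Aᴴ = (θ A)ᴴ)
    (hθtr : ∀ A, Matrix.trace (θ A) = (starRingEnd ℂ) (Matrix.trace A))
    (hθc : ∀ j, θ (c j) = c (ρ j))
    (A : Matrix (Fin (2 ^ N)) (Fin (2 ^ N)) ℂ)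
    (a : Finset (Fin (2 * N)) → ℂ)
    (hA : A = ∑ β ∈ Λm.powerset, a β • cliffordMonomial c β) :
    Matrix.trace (A * θ A) = (2 : ℂ) ^ N * ((‖a ∅‖ : ℝ) : ℂ) ^ 2 :=
  trace_mul_reflect_eq_const_coeff_general N c hClif Λm Λp hdisj ρ hρm θ hθadd hθsmul hθmul hθtr hθc
    A a hA
end
end

section
/- Let N=1 with Majoranas c_1 ∈ 𝔄_-, c_2 = ϑ(c_1) ∈ 𝔄_+, H = -i c_1 ϑ(c_1), and A = c_1. Then Tr(A ϑ(A) e^{-H}) = -2i sinh(1), which is purely imaginary; hence reflection positivity fails on the full (non-even) fermionic algebra. -/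
open Matrix
open scoped ComplexOrder

noncomputable section

/-! With `K = c₁ c₂` one has `K² = -1`, so `iK` is an involution and
`e^{iK} = cosh 1 + sinh 1 · iK`. Hence `K e^{iK} = cosh 1 · K - i sinh 1`, and since the
anticommutation makes `tr K = 0`, only `-i sinh 1 · tr 1 = -2i sinh 1` survives. -/

open NormedSpace in
theorem NormedSpace.exp_smul_of_mul_self_eq_one {𝔸 : Type*} [Ring 𝔸] [Algebra ℂ 𝔸]
    [TopologicalSpace 𝔸] [IsTopologicalRing 𝔸] [ContinuousSMul ℂ 𝔸] [T2Space 𝔸]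
    {x : 𝔸} (hx : x * x = 1) (t : ℂ) :
    exp (t • x) = Complex.cosh t • (1 : 𝔸) + Complex.sinh t • x := by
  have hx_even (n : ℕ) : x ^ (2 * n) = 1 := by rw [pow_mul, sq, hx, one_pow]
  have hx_odd (n : ℕ) : x ^ (2 * n + 1) = x := by rw [pow_succ, hx_even, one_mul]
  rw [exp_eq_tsum ℂ]
  refine HasSum.tsum_eq (HasSum.even_add_odd ?_ ?_)
  · convert (Complex.hasSum_cosh t).smul_const (1 : 𝔸) using 2 with n
    rw [smul_pow, hx_even, smul_smul, div_eq_inv_mul]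
  · convert (Complex.hasSum_sinh t).smul_const x using 2 with n
    rw [smul_pow, hx_odd, smul_smul, div_eq_inv_mul]

theorem mul_mul_self_eq_neg_one_of_anticomm {R : Type*} [Ring R] {a b : R}
    (ha : a * a = 1) (hb : b * b = 1) (hab : a * b + b * a = 0) :
    (a * b) * (a * b) = -1 := by
  calc (a * b) * (a * b) = a * (b * a) * b := by noncomm_ring
    _ = -(a * a * (b * b)) := by rw [eq_neg_of_add_eq_zero_right hab]; noncomm_ring
    _ = -1 := by rw [ha, hb, one_mul]

theorem Matrix.trace_mul_eq_zero_of_anticomm {n R : Type*} [Fintype n] [CommRing R]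
    [NoZeroDivisors R] [CharZero R] {A B : Matrix n n R} (hAB : A * B + B * A = 0) :
    trace (A * B) = 0 := by
  have h : trace (A * B) = -trace (A * B) := by
    rw [← trace_neg, ← eq_neg_of_add_eq_zero_right hAB]
    exact trace_mul_comm A B
  exact self_eq_neg.mp h

theorem reflection_positivity_fails_on_odd_algebra_general
    (c₁ c₂ : Matrix (Fin 2) (Fin 2) ℂ)
    (h11 : c₁ * c₁ = 1) (h22 : c₂ * c₂ = 1)
    (h12 : c₁ * c₂ + c₂ * c₁ = 0)
    (θ : Matrix (Fin 2) (Fin 2) ℂ → Matrix (Fin 2) (Fin 2) ℂ)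
    (hθc1 : θ c₁ = c₂) :
    Matrix.trace (c₁ * θ c₁ * mexp (-(-Complex.I • (c₁ * θ c₁)))) =
      -2 * Complex.I * Real.sinh 1 := by
  rw [hθc1]
  set K := c₁ * c₂
  have hK : K * K = -1 := mul_mul_self_eq_neg_one_of_anticomm h11 h22 h12
  have hIK : (Complex.I • K) * (Complex.I • K) = 1 := by
    rw [smul_mul_smul_comm, hK, Complex.I_mul_I, neg_one_smul, neg_neg]
  have hexp : mexp (-(-Complex.I • K)) =
      Complex.cosh 1 • 1 + Complex.sinh 1 • (Complex.I • K) := by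
    rw [mexp, neg_smul, neg_neg, ← one_smul ℂ (Complex.I • K),
      NormedSpace.exp_smul_of_mul_self_eq_one hIK, one_smul]
  have htrK : trace K = 0 := trace_mul_eq_zero_of_anticomm h12
  rw [hexp, mul_add, mul_smul_comm, mul_one, mul_smul_comm, mul_smul_comm, hK, trace_add,
    trace_smul, trace_smul, trace_smul, htrK, trace_neg, trace_one, Complex.ofReal_sinh]
  simp only [Fintype.card_fin, smul_eq_mul]
  push_cast
  ring

/-- Counterexample: for `N = 1`, `H = -i c₁ ϑ(c₁)` and `A = c₁`, one has
`Tr(A ϑ(A) e^(-H)) = -2i sinh 1`, which is purely imaginary; hence reflection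
positivity fails on the full (non-even) fermionic algebra. -/
theorem reflection_positivity_fails_on_odd_algebra
    (c₁ c₂ : Matrix (Fin 2) (Fin 2) ℂ)
    (h11 : c₁ * c₁ = 1) (h22 : c₂ * c₂ = 1)
    (h12 : c₁ * c₂ + c₂ * c₁ = 0)
    (hsa1 : c₁ᴴ = c₁) (hsa2 : c₂ᴴ = c₂)
    (θ : Matrix (Fin 2) (Fin 2) ℂ → Matrix (Fin 2) (Fin 2) ℂ)
    (hθc1 : θ c₁ = c₂) (hθc2 : θ c₂ = c₁) :
    Matrix.trace (c₁ * θ c₁ * mexp (-(-Complex.I • (c₁ * θ c₁)))) =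
      -2 * Complex.I * Real.sinh 1 :=
  reflection_positivity_fails_on_odd_algebra_general c₁ c₂ h11 h22 h12 θ hθc1
end
end
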